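/- arXiv:1508.02817 — 2 statements merged into one kernel-verified Lean document; each statement's English description precedes it below -/
import Mathlib

section
/- If (Y,S) is a POD (proximal orbit dense) minimal dynamical system and (X,T) is a minimal dynamical system such that (Y,S) is not a factor of (X,T), then (X,T) and (Y,S) are disjoint, i.e., the only closed (T×S)-invariant subset of X×Y projecting onto both factors is X×Y itself. -/
/-!
Take a minimal subset `W` of a joining. If every fibre of `W` over `X` is a single point, `W` is
the graph of a continuous equivariant surjection `X → Y`, i.e. of a factor map. Otherwise two
points `y ≠ y'` lie over a common point of `X`. The pairs of points lying over a common point form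
a closed `S × S`-invariant set, so by POD it contains a graph `Γₙ` with `n ≠ 0`; hence `W` contains
`(x₀, y)` and `(x₀, Sⁿ y)` for some `x₀`. Then `W` and its image under `id × Sⁿ` are minimal sets
sharing a point, so they coincide, and minimality of `Sⁿ` forces every fibre of `W` to be all of `Y`.
-/

/-- The group of self-homeomorphisms under composition, so that `T ^ n` (`n : ℤ`)
denotes the `n`-th iterate of `T`. -/
instance Homeomorph.instGroupSelf {X : Type*} [TopologicalSpace X] : Group (X ≃ₜ X) where
  mul f g := g.trans f
  one := Homeomorph.refl X
  inv := Homeomorph.symm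
  mul_assoc _ _ _ := Homeomorph.ext fun _ => rfl
  one_mul _ := Homeomorph.ext fun _ => rfl
  mul_one _ := Homeomorph.ext fun _ => rfl
  inv_mul_cancel f := Homeomorph.ext fun x => f.symm_apply_apply x

/-- The orbit closure of a point under a homeomorphism. -/
def orbitCl {X : Type*} [TopologicalSpace X] (T : X ≃ₜ X) (p : X) : Set X :=
  closure {q | ∃ n : ℤ, (T ^ n) p = q}

/-- A (minimal) dynamical system: every orbit closure is everything. -/
def IsMinimalSys {X : Type*} [TopologicalSpace X] (T : X ≃ₜ X) : Prop :=
  ∀ x : X, orbitCl T x = Set.univ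

/-- Totally minimal: every nonzero power is minimal. -/
def IsTotallyMinimal {X : Type*} [TopologicalSpace X] (T : X ≃ₜ X) : Prop :=
  ∀ n : ℤ, n ≠ 0 → IsMinimalSys (T ^ n)

/-- The graph Γ_n = {(T^n x, x) : x ∈ X}. -/
def graphPow {X : Type*} [TopologicalSpace X] (T : X ≃ₜ X) (n : ℤ) : Set (X × X) :=
  {p | ∃ x : X, p = ((T ^ n) x, x)}

/-- POD: totally minimal and for distinct u, v some graph Γ_n (n ≠ 0) lies in the
orbit closure of (u, v) under T × T. -/
def IsPOD {X : Type*} [TopologicalSpace X] (T : X ≃ₜ X) : Prop :=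
  IsMinimalSys T ∧ IsTotallyMinimal T ∧
    ∀ u v : X, u ≠ v → ∃ n : ℤ, n ≠ 0 ∧
      graphPow T n ⊆ orbitCl (T.prodCongr T) (u, v)

/-- Doubly minimal: minimal, and every orbit closure of T × T is either everything
or a graph Γ_m. -/
def IsDoublyMinimal {X : Type*} [TopologicalSpace X] (T : X ≃ₜ X) : Prop :=
  IsMinimalSys T ∧
    ∀ p : X × X, orbitCl (T.prodCongr T) p = Set.univ ∨
      ∃ m : ℤ, orbitCl (T.prodCongr T) p = graphPow T m

/-- A factor map: continuous equivariant surjection. -/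
def IsFactorMap {X Y : Type*} [TopologicalSpace X] [TopologicalSpace Y]
    (T : X ≃ₜ X) (S : Y ≃ₜ Y) (π : X → Y) : Prop :=
  Continuous π ∧ Function.Surjective π ∧ ∀ x, π (T x) = S (π x)

/-- Disjointness: the only closed invariant subset of the product projecting
onto both coordinates is the whole product. -/
def SysDisjoint {X Y : Type*} [TopologicalSpace X] [TopologicalSpace Y]
    (T : X ≃ₜ X) (S : Y ≃ₜ Y) : Prop :=
  ∀ M : Set (X × Y), IsClosed M → (T.prodCongr S) '' M = M →
    Prod.fst '' M = Set.univ → Prod.snd '' M = Set.univ → M = Set.univ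

/-- A recurrent point: in the closure of its forward orbit with positive times. -/
def IsRecurrentPt {X : Type*} [TopologicalSpace X] (T : X ≃ₜ X) (x : X) : Prop :=
  x ∈ closure {q | ∃ n : ℕ, 1 ≤ n ∧ (T ^ n) x = q}

/-- A proximal pair: the orbits come arbitrarily close together. -/
def IsProximal {X : Type*} [PseudoMetricSpace X] (T : X ≃ₜ X) (x x' : X) : Prop :=
  ∀ ε > 0, ∃ n : ℤ, dist ((T ^ n) x) ((T ^ n) x') < ε

/-- A distal point: proximal only to itself. -/
def IsDistalPt {X : Type*} [PseudoMetricSpace X] (T : X ≃ₜ X) (x : X) : Prop :=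
  ∀ x', IsProximal T x x' → x' = x

/-- A minimal subset: nonempty, closed, invariant, with all orbits dense in it. -/
def IsMinimalSubset {X : Type*} [TopologicalSpace X] (T : X ≃ₜ X) (M : Set X) : Prop :=
  M.Nonempty ∧ IsClosed M ∧ (T : X ≃ₜ X) '' M = M ∧
    ∀ p ∈ M, M ⊆ closure {q | ∃ n : ℤ, (T ^ n) p = q}

/-- Topological transitivity. -/
def IsTopTransitive {X : Type*} [TopologicalSpace X] (T : X ≃ₜ X) : Prop :=
  ∀ U V : Set X, IsOpen U → IsOpen V → U.Nonempty → V.Nonempty →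
    ∃ n : ℤ, ((T ^ n) '' U ∩ V).Nonempty

/-- Weak mixing: the product system is topologically transitive. -/
def IsWeaklyMixing {X : Type*} [TopologicalSpace X] (T : X ≃ₜ X) : Prop :=
  IsTopTransitive (T.prodCongr T)

open Set

section Orbits

variable {X : Type*} [TopologicalSpace X]

theorem Homeomorph.image_eq_self_iff (f : X ≃ₜ X) {A : Set X} :
    f '' A = A ↔ ∀ x, f x ∈ A ↔ x ∈ A := by
  rw [eq_comm, ← preimage_eq_iff_eq_image f.bijective, Set.ext_iff]
  rfl

theorem Homeomorph.image_zpow_eq_of_image_eq {f : X ≃ₜ X} {A : Set X} (hA : f '' A = A)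
    (n : ℤ) : (f ^ n) '' A = A :=
  let stabilizer : Subgroup (X ≃ₜ X) :=
    { carrier := {g | g '' A = A}
      one_mem' := image_id A
      mul_mem' := fun {g h} hg hh => by
        change (g ∘ h) '' A = A
        rw [image_comp, hh, hg]
      inv_mem' := fun {g} hg =>
        calc g.symm '' A = g.symm '' (g '' A) := by rw [hg]
          _ = A := g.symm_image_image A }
  stabilizer.zpow_mem (show f ∈ stabilizer from hA) n

theorem mem_orbitCl_self (f : X ≃ₜ X) (p : X) : p ∈ orbitCl f p :=
  subset_closure ⟨0, rfl⟩

theorem orbitCl_subset_of_isClosed {f : X ≃ₜ X} {A : Set X} (hAc : IsClosed A)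
    (hA : f '' A = A) {p : X} (hp : p ∈ A) : orbitCl f p ⊆ A := by
  refine closure_minimal ?_ hAc
  rintro _ ⟨n, rfl⟩
  rw [← f.image_zpow_eq_of_image_eq hA n]
  exact mem_image_of_mem _ hp

theorem image_orbitCl_of_commute {f φ : X ≃ₜ X} (h : Commute φ f) (p : X) :
    φ '' orbitCl f p = orbitCl f (φ p) := by
  have hφ : (φ ∘ fun n : ℤ => (f ^ n) p) = fun n => (f ^ n) (φ p) :=
    funext fun n => DFunLike.congr_fun (h.zpow_right n).eq p
  change φ '' closure (range fun n : ℤ => (f ^ n) p) = closure (range fun n : ℤ => (f ^ n) (φ p))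
  rw [φ.image_closure, ← range_comp, hφ]

theorem orbitCl_apply_self (f : X ≃ₜ X) (p : X) : orbitCl f (f p) = orbitCl f p := by
  have hshift : (fun n : ℤ => (f ^ n) (f p)) = (fun n : ℤ => (f ^ n) p) ∘ Equiv.addRight 1 :=
    funext fun n => by simp [zpow_add_one]
  change closure (range _) = closure (range _)
  rw [hshift, (Equiv.addRight (1 : ℤ)).surjective.range_comp]

theorem image_orbitCl (f : X ≃ₜ X) (p : X) : f '' orbitCl f p = orbitCl f p := by
  rw [image_orbitCl_of_commute (Commute.refl f), orbitCl_apply_self]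

theorem IsMinimalSys.eq_univ_of_isClosed {f : X ≃ₜ X} (hf : IsMinimalSys f) {A : Set X}
    (hAc : IsClosed A) (hA : f '' A = A) (hne : A.Nonempty) : A = univ := by
  obtain ⟨p, hp⟩ := hne
  exact eq_univ_of_univ_subset (hf p ▸ orbitCl_subset_of_isClosed hAc hA hp)

theorem IsMinimalSubset.orbitCl_eq {f : X ≃ₜ X} {W : Set X} (hW : IsMinimalSubset f W)
    {p : X} (hp : p ∈ W) : orbitCl f p = W :=
  (orbitCl_subset_of_isClosed hW.2.1 hW.2.2.1 hp).antisymm (hW.2.2.2 p hp)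

theorem IsMinimalSubset.image_eq_of_commute {f φ : X ≃ₜ X} {W : Set X}
    (hW : IsMinimalSubset f W) (hφ : Commute φ f) {p : X} (hp : p ∈ W) (hφp : φ p ∈ W) :
    φ '' W = W :=
  calc φ '' W = φ '' orbitCl f p := by rw [hW.orbitCl_eq hp]
    _ = W := by rw [image_orbitCl_of_commute hφ, hW.orbitCl_eq hφp]

theorem exists_isMinimalSubset_subset [CompactSpace X] (f : X ≃ₜ X) {C : Set X}
    (hCc : IsClosed C) (hC : f '' C = C) (hne : C.Nonempty) :
    ∃ W ⊆ C, IsMinimalSubset f W := by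
  let S : Set (Set X) := {D | D.Nonempty ∧ IsClosed D ∧ f '' D = D}
  have chain_bound : ∀ c ⊆ S, IsChain (· ⊆ ·) c → c.Nonempty → ∃ lb ∈ S, ∀ D ∈ c, lb ⊆ D := by
    intro c hcS hc hcne
    have : Nonempty c := hcne.to_subtype
    have hclosed : ∀ D : c, IsClosed (D : Set X) := fun D => (hcS D.2).2.1
    refine ⟨⋂ D : c, D, ⟨?_, isClosed_iInter hclosed, ?_⟩,
      fun D hD => iInter_subset (fun D : c => (D : Set X)) ⟨D, hD⟩⟩
    · have hdir : Directed (· ⊇ ·) fun D : c => (D : Set X) := fun a b =>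
        (hc.total a.2 b.2).elim (fun h => ⟨a, subset_rfl, h⟩) fun h => ⟨b, h, subset_rfl⟩
      exact IsCompact.nonempty_iInter_of_directed_nonempty_isCompact_isClosed _
        hdir (fun D => (hcS D.2).1)
        (fun D => (hclosed D).isCompact) hclosed
    · rw [f.injective.injOn.image_iInter_eq]
      exact iInter_congr fun D => (hcS D.2).2.2
  obtain ⟨W, hWC, hWmin⟩ := zorn_superset_nonempty S chain_bound C ⟨hne, hCc, hC⟩
  obtain ⟨hWne, hWc, hWi⟩ := hWmin.prop
  refine ⟨W, hWC, hWne, hWc, hWi, fun p hp => ?_⟩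
  exact hWmin.le_of_le ⟨⟨p, mem_orbitCl_self f p⟩, isClosed_closure, image_orbitCl f p⟩
    (orbitCl_subset_of_isClosed hWc hWi hp)

end Orbits

section Product

variable {X Y : Type*} [TopologicalSpace X] [TopologicalSpace Y] {T : X ≃ₜ X} {S : Y ≃ₜ Y}
  {W : Set (X × Y)}

theorem image_fst_eq_univ_of_isMinimalSys [CompactSpace Y] (hT : IsMinimalSys T)
    (hWc : IsClosed W) (hW : T.prodCongr S '' W = W) (hne : W.Nonempty) :
    Prod.fst '' W = univ := by
  refine hT.eq_univ_of_isClosed (isClosedMap_fst_of_compactSpace W hWc) ?_ (hne.image _)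
  conv_rhs => rw [← hW]
  rw [image_image, image_image]
  rfl

theorem image_snd_eq_univ_of_isMinimalSys [CompactSpace X] (hS : IsMinimalSys S)
    (hWc : IsClosed W) (hW : T.prodCongr S '' W = W) (hne : W.Nonempty) :
    Prod.snd '' W = univ := by
  refine hS.eq_univ_of_isClosed (isClosedMap_snd_of_compactSpace W hWc) ?_ (hne.image _)
  conv_rhs => rw [← hW]
  rw [image_image, image_image]
  rfl

theorem exists_isFactorMap_of_subsingleton_fibers [CompactSpace Y] (hWc : IsClosed W)
    (hW : T.prodCongr S '' W = W) (hfst : Prod.fst '' W = univ) (hsnd : Prod.snd '' W = univ)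
    (hfib : ∀ x y y', (x, y) ∈ W → (x, y') ∈ W → y = y') :
    ∃ π : X → Y, IsFactorMap T S π := by
  have hsection : ∀ x, ∃ y, (x, y) ∈ W := fun x => by
    obtain ⟨⟨_, y⟩, h, rfl⟩ := hfst.symm ▸ mem_univ x
    exact ⟨y, h⟩
  choose π hπ using hsection
  have hgraph : ∀ x y, (x, y) ∈ W → π x = y := fun x y h => hfib x _ _ (hπ x) h
  refine ⟨π, continuous_iff_isClosed.2 fun C hC => ?_, fun y => ?_, fun x => ?_⟩
  · have hpre : π ⁻¹' C = Prod.fst '' (W ∩ Prod.snd ⁻¹' C) := by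
      ext x
      refine ⟨fun hx => ⟨(x, π x), ⟨hπ x, hx⟩, rfl⟩, ?_⟩
      rintro ⟨⟨x, y⟩, ⟨h, hy⟩, rfl⟩
      exact (hgraph x y h).symm ▸ hy
    rw [hpre]
    exact isClosedMap_fst_of_compactSpace _ (hWc.inter (hC.preimage continuous_snd))
  · obtain ⟨⟨x, y⟩, h, rfl⟩ := hsnd.symm ▸ mem_univ y
    exact ⟨x, hgraph x y h⟩
  · refine hgraph _ _ ?_
    rw [← hW]
    exact mem_image_of_mem (T.prodCongr S) (hπ x)

theorem eq_univ_of_image_refl_prodCongr_eq {g : Y ≃ₜ Y} (hg : IsMinimalSys g)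
    (hWc : IsClosed W) (hfst : Prod.fst '' W = univ)
    (hW : (Homeomorph.refl X).prodCongr g '' W = W) : W = univ := by
  refine eq_univ_of_forall fun ⟨x, y⟩ => ?_
  have hfiber : Prod.mk x ⁻¹' W = univ := by
    refine hg.eq_univ_of_isClosed (hWc.preimage (Continuous.prodMk_right x)) ?_ ?_
    · exact g.image_eq_self_iff.2 fun z =>
        ((Homeomorph.refl X).prodCongr g).image_eq_self_iff.1 hW (x, z)
    · obtain ⟨⟨_, z⟩, h, rfl⟩ := hfst.symm ▸ mem_univ x
      exact ⟨z, h⟩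
  exact (hfiber.symm ▸ mem_univ y : y ∈ Prod.mk x ⁻¹' W)

theorem IsMinimalSubset.image_refl_prodCongr_zpow_eq (hW : IsMinimalSubset (T.prodCongr S) W)
    {x : X} {y : Y} (n : ℤ) (hy : (x, y) ∈ W) (hy' : (x, (S ^ n) y) ∈ W) :
    (Homeomorph.refl X).prodCongr (S ^ n) '' W = W :=
  hW.image_eq_of_commute
    (Homeomorph.ext fun p => Prod.ext rfl (DFunLike.congr_fun (Commute.self_zpow S n).eq p.2).symm)
    hy hy'

end Product

section POD

variable {X Y : Type*} [TopologicalSpace X] [TopologicalSpace Y] {T : X ≃ₜ X} {S : Y ≃ₜ Y}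
  {W : Set (X × Y)}

def fiberPairs (W : Set (X × Y)) : Set (Y × Y) :=
  {q | ∃ x, (x, q.1) ∈ W ∧ (x, q.2) ∈ W}

theorem isClosed_fiberPairs [CompactSpace X] (hWc : IsClosed W) : IsClosed (fiberPairs W) := by
  have hN : IsClosed {p : X × (Y × Y) | (p.1, p.2.1) ∈ W ∧ (p.1, p.2.2) ∈ W} :=
    (hWc.preimage (by fun_prop)).inter (hWc.preimage (by fun_prop))
  convert isClosedMap_snd_of_compactSpace _ hN using 1
  ext
  simp [fiberPairs]

theorem image_fiberPairs (hW : T.prodCongr S '' W = W) :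
    S.prodCongr S '' fiberPairs W = fiberPairs W := by
  have hmem := (T.prodCongr S).image_eq_self_iff.1 hW
  refine (S.prodCongr S).image_eq_self_iff.2 fun ⟨y, y'⟩ => ⟨?_, ?_⟩
  · rintro ⟨x, h, h'⟩
    exact ⟨T.symm x, (hmem (T.symm x, y)).1 (by simpa using h),
      (hmem (T.symm x, y')).1 (by simpa using h')⟩
  · rintro ⟨x, h, h'⟩
    exact ⟨T x, (hmem (x, y)).2 h, (hmem (x, y')).2 h'⟩

theorem IsPOD.exists_graphPow_subset_fiberPairs [CompactSpace X] (hS : IsPOD S)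
    (hWc : IsClosed W) (hW : T.prodCongr S '' W = W) {x : X} {y y' : Y} (hne : y ≠ y')
    (hy : (x, y) ∈ W) (hy' : (x, y') ∈ W) : ∃ n ≠ 0, graphPow S n ⊆ fiberPairs W := by
  obtain ⟨n, hn, hΓ⟩ := hS.2.2 y y' hne
  exact ⟨n, hn, hΓ.trans <|
    orbitCl_subset_of_isClosed (isClosed_fiberPairs hWc) (image_fiberPairs hW) ⟨x, hy, hy'⟩⟩

theorem IsPOD.eq_univ_of_isMinimalSubset [CompactSpace X] (hS : IsPOD S)
    (hW : IsMinimalSubset (T.prodCongr S) W) (hfst : Prod.fst '' W = univ) {x : X} {y y' : Y}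
    (hne : y ≠ y') (hy : (x, y) ∈ W) (hy' : (x, y') ∈ W) : W = univ := by
  obtain ⟨n, hn, hΓ⟩ := hS.exists_graphPow_subset_fiberPairs hW.2.1 hW.2.2.1 hne hy hy'
  obtain ⟨x₀, hx₀n, hx₀⟩ := hΓ ⟨y, rfl⟩
  exact eq_univ_of_image_refl_prodCongr_eq (hS.2.1 n hn) hW.2.1 hfst
    (hW.image_refl_prodCongr_zpow_eq n hx₀ hx₀n)

end POD

theorem pod_disjoint {X Y : Type*} [MetricSpace X] [CompactSpace X] [MetricSpace Y] [CompactSpace Y]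
    (T : X ≃ₜ X) (S : Y ≃ₜ Y) (hS : IsPOD S) (hT : IsMinimalSys T)
    (hnf : ¬ ∃ π : X → Y, IsFactorMap T S π) :
    SysDisjoint T S := by
  intro M hMc hMi hfst _
  rcases M.eq_empty_or_nonempty with rfl | hMne
  · have : IsEmpty X := univ_eq_empty_iff.1 (hfst.symm.trans (image_empty _))
    exact (univ_eq_empty_iff.2 inferInstance).symm
  obtain ⟨W, hWM, hW⟩ := exists_isMinimalSubset_subset _ hMc hMi hMne
  have ⟨hWne, hWc, hWi, _⟩ := hW
  have hWfst := image_fst_eq_univ_of_isMinimalSys hT hWc hWi hWne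
  by_cases hfib : ∀ x y y', (x, y) ∈ W → (x, y') ∈ W → y = y'
  · exact absurd (exists_isFactorMap_of_subsingleton_fibers hWc hWi hWfst
      (image_snd_eq_univ_of_isMinimalSys hS.1 hWc hWi hWne) hfib) hnf
  · push Not at hfib
    obtain ⟨x, y, y', hy, hy', hne⟩ := hfib
    exact eq_univ_of_univ_subset (hS.eq_univ_of_isMinimalSubset hW hWfst hne hy hy' ▸ hWM)
end

section
/- Let π : X → Y be a factor map of minimal systems with Y doubly minimal. If (y₀, x₁) ∈ Y×X satisfies π(x₁) = T^n y₀ for some n ∈ ℤ, then the orbit closure of (y₀, x₁) under the product homeomorphism equals {(π(x), T^n x) : x ∈ X}, hence it is the graph of the factor map π∘T^{-n} and is isomorphic to X. -/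
/-! The map `φ x = (π x, T^n x)` is continuous and equivariant, and sends `T^(-n) x₁` to
`(y₀, x₁)`. Since `X` is compact, `φ` is a closed map, so it carries the dense orbit of
`T^(-n) x₁` onto a dense subset of its image: the orbit closure of `(y₀, x₁)` is the range
of `φ`. -/

open Function

theorem Function.Semiconj.homeomorph_zpow {X Y : Type*} [TopologicalSpace X] [TopologicalSpace Y]
    {f : X → Y} {T : X ≃ₜ X} {S : Y ≃ₜ Y} (h : Semiconj f T S) (m : ℤ) :
    Semiconj f ⇑(T ^ m) ⇑(S ^ m) := by
  induction m using Int.induction_on with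
  | zero => exact Semiconj.id_right
  | succ k ih =>
    rw [zpow_add_one, zpow_add_one]
    exact ih.comp_right h
  | pred k ih =>
    rw [zpow_sub_one, zpow_sub_one]
    exact ih.comp_right (h.inverses_right T.apply_symm_apply S.symm_apply_apply)

theorem orbitCl_eq_range_of_semiconj {X Z : Type*} [TopologicalSpace X] [CompactSpace X]
    [TopologicalSpace Z] [T2Space Z] {T : X ≃ₜ X} {R : Z ≃ₜ Z} (hT : IsMinimalSys T)
    {φ : X → Z} (hφ : Continuous φ) (hsemi : Semiconj φ T R) (x : X) :
    orbitCl R (φ x) = Set.range φ := by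
  have horbit : {q | ∃ m : ℤ, (R ^ m) (φ x) = q} = φ '' {q | ∃ m : ℤ, (T ^ m) x = q} := by
    ext q
    simp [(hsemi.homeomorph_zpow _).eq]
  rw [orbitCl, horbit, hφ.isClosedMap.closure_image_eq_of_continuous hφ,
    show closure _ = Set.univ from hT x, Set.image_univ]

theorem orbitCl_of_onOrbit_general {X Y : Type*} [MetricSpace X] [CompactSpace X] [MetricSpace Y]
    (T : X ≃ₜ X) (S : Y ≃ₜ Y) (π : X → Y) (hπ : IsFactorMap T S π)
    (hT : IsMinimalSys T)
    (y₀ : Y) (x₁ : X) (n : ℤ) (h : π x₁ = (S ^ n) y₀) :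
    orbitCl (S.prodCongr T) (y₀, x₁) = {p : Y × X | ∃ x : X, p = (π x, (T ^ n) x)} := by
  obtain ⟨hπc, -, hπT⟩ := hπ
  set φ : X → Y × X := fun x => (π x, (T ^ n) x)
  have hsemi : Semiconj φ T (S.prodCongr T) := fun x =>
    Prod.ext (hπT x) (congrFun (congrArg DFunLike.coe ((Commute.refl T).zpow_left n)) x)
  have hx₀ : φ ((T ^ (-n)) x₁) = (y₀, x₁) := by
    have hT_inv : (T ^ n) ((T ^ (-n)) x₁) = x₁ := by
      rw [← Homeomorph.mul_apply, zpow_neg, mul_inv_cancel, Homeomorph.one_apply]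
    refine Prod.ext ?_ hT_inv
    rw [← (S ^ n).injective.eq_iff, ← (Semiconj.homeomorph_zpow hπT n).eq, hT_inv, h]
  rw [← hx₀, orbitCl_eq_range_of_semiconj hT (hπc.prodMk (T ^ n).continuous) hsemi]
  ext p
  simp [eq_comm]

theorem orbitCl_of_onOrbit {X Y : Type*} [MetricSpace X] [CompactSpace X] [MetricSpace Y] [CompactSpace Y]
    (T : X ≃ₜ X) (S : Y ≃ₜ Y) (π : X → Y) (hπ : IsFactorMap T S π)
    (hT : IsMinimalSys T) (hS : IsDoublyMinimal S)
    (y₀ : Y) (x₁ : X) (n : ℤ) (h : π x₁ = (S ^ n) y₀) :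
    orbitCl (S.prodCongr T) (y₀, x₁) = {p : Y × X | ∃ x : X, p = (π x, (T ^ n) x)} :=
  orbitCl_of_onOrbit_general T S π hπ hT y₀ x₁ n h
end
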